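/- arXiv:2604.21793 — 3 statements merged into one kernel-verified Lean document; each statement's English description precedes it below -/
import Mathlib

section
/- Let X be a finite set with level function lvl : X → ℕ and a symmetric, irreflexive conflict relation E on X such that no two distinct elements with the same level conflict. Define Con S iff no two elements of S conflict. Define R* by processing levels in increasing order: R* contains x iff x conflicts with no element y ∈ R* with lvl y < lvl x (formally, by strong induction on levels: x ∈ R* iff ∀ y, lvl y < lvl x → y ∈ R* → ¬ E x y). Then R* is the unique ≤_P-maximal Con-subset of X, where ≤_P is the level-lexicographic order. -/
def levelSet {X : Type*} (lvl : X → ℕ) (S : Set X) (ℓ : ℕ) : Set X :=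
  {x ∈ S | lvl x = ℓ}

def leP {X : Type*} (lvl : X → ℕ) (S S' : Set X) : Prop :=
  S = S' ∨ ∃ k : ℕ, (∀ ℓ < k, levelSet lvl S ℓ = levelSet lvl S' ℓ) ∧
    levelSet lvl S k ⊂ levelSet lvl S' k

/-- The greedy level-by-level repair: `x` is kept iff it conflicts with no kept
element of strictly smaller level. -/
def Rstar {X : Type*} (lvl : X → ℕ) (E : X → X → Prop) (x : X) : Prop :=
  ∀ y : X, lvl y < lvl x → Rstar lvl E y → ¬ E x y
termination_by lvl x

/-- when conflicts never relate elements of equal level, the greedy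
set `Rstar` is the unique ≤_P-maximal conflict-free subset. -/
theorem stmt10 {X : Type*} [Fintype X] (lvl : X → ℕ) (E : X → X → Prop)
    (hsymm : ∀ x y, E x y → E y x) (hirr : ∀ x, ¬ E x x)
    (hlevel : ∀ x y, lvl x = lvl y → ¬ E x y) :
    (∀ x ∈ {x : X | Rstar lvl E x}, ∀ y ∈ {x : X | Rstar lvl E x}, ¬ E x y) ∧
    (∀ S : Set X, (∀ x ∈ S, ∀ y ∈ S, ¬ E x y) →
      leP lvl {x : X | Rstar lvl E x} S → {x : X | Rstar lvl E x} = S) ∧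
    (∀ R : Set X, (∀ x ∈ R, ∀ y ∈ R, ¬ E x y) →
      (∀ S : Set X, (∀ x ∈ S, ∀ y ∈ S, ¬ E x y) → leP lvl R S → R = S) →
      R = {x : X | Rstar lvl E x}) := by
  classical
  set R0 : Set X := {x : X | Rstar lvl E x} with hR0
  have hmem : ∀ x, x ∈ R0 ↔ Rstar lvl E x := fun x => Iff.rfl
  have hcon : ∀ x ∈ R0, ∀ y ∈ R0, ¬ E x y := by
    intro x hx y hy hE
    rcases lt_trichotomy (lvl y) (lvl x) with h | h | h
    · have hx' := hx
      rw [hmem, Rstar] at hx'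
      exact hx' y h hy hE
    · exact hlevel x y h.symm hE
    · have hy' := hy
      rw [hmem, Rstar] at hy'
      exact hy' x h hx (hsymm x y hE)
  have hmax : ∀ S : Set X, (∀ x ∈ S, ∀ y ∈ S, ¬ E x y) → leP lvl R0 S → R0 = S := by
    intro S hS hle
    rcases hle with h | ⟨k, hlt, hsub⟩
    · exact h
    · exfalso
      rcases Set.exists_of_ssubset hsub with ⟨x, hxS, hxR⟩
      obtain ⟨hxS', hxk⟩ := hxS
      have hxR0 : ¬ Rstar lvl E x := fun h => hxR ⟨h, hxk⟩
      rw [Rstar] at hxR0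
      push_neg at hxR0
      obtain ⟨y, hy1, hy2, hy3⟩ := hxR0
      have hylt : lvl y < k := hxk ▸ hy1
      have hyS : y ∈ levelSet lvl S (lvl y) := by
        rw [← hlt (lvl y) hylt]; exact ⟨hy2, rfl⟩
      exact hS x hxS' y hyS.1 hy3
  refine ⟨hcon, hmax, ?_⟩
  intro R hR hRmax
  by_contra hne
  have hset : ∃ k, levelSet lvl R k ≠ levelSet lvl R0 k := by
    by_contra h
    push_neg at h
    apply hne
    ext x
    constructor <;> intro hx
    · have hx' : x ∈ levelSet lvl R0 (lvl x) := h (lvl x) ▸ (⟨hx, rfl⟩ : x ∈ levelSet lvl R (lvl x))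
      exact hx'.1
    · have hx' : x ∈ levelSet lvl R (lvl x) := (h (lvl x)).symm ▸ (⟨hx, rfl⟩ : x ∈ levelSet lvl R0 (lvl x))
      exact hx'.1
  set k := Nat.find hset with hk
  have hkne : levelSet lvl R k ≠ levelSet lvl R0 k := Nat.find_spec hset
  have hlt : ∀ ℓ < k, levelSet lvl R ℓ = levelSet lvl R0 ℓ := by
    intro ℓ hℓ
    by_contra h
    exact Nat.find_min hset hℓ h
  have hsub : levelSet lvl R k ⊆ levelSet lvl R0 k := by
    rintro x ⟨hxR, hxk⟩
    refine ⟨?_, hxk⟩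
    rw [hmem, Rstar]
    intro y hy1 hy2 hE
    have hylt : lvl y < k := hxk ▸ hy1
    have hyR : y ∈ levelSet lvl R (lvl y) := by
      rw [hlt (lvl y) hylt]; exact ⟨hy2, rfl⟩
    exact hR x hxR y hyR.1 hE
  have hssub : levelSet lvl R k ⊂ levelSet lvl R0 k := ⟨hsub, fun h => hkne (le_antisymm hsub h)⟩
  exact hne (hRmax R0 hcon (Or.inr ⟨k, hlt, hssub⟩))
end

section
/- Let φ be a CNF formula over variables indexed by Fin k (k ≥ 1) and assume φ is satisfied by a valuation μ : Fin k → Bool. Consider the ground set X = {Q} ∪ {(i, b) : i ∈ Fin k, b ∈ Bool}, and define S ⊆ X consistent iff (1) for no i are both (i,true) and (i,false) in S, (2) if Q ∈ S then for every clause of φ some literal of that clause is witnessed in S, and (3) Q ∉ S whenever all clauses are satisfied by the assignments in S. Then the set R = {(i, μ i) : i ∈ Fin k} is a ⊆-maximal consistent subset of X not containing Q. -/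
/-- Consistency for the cautious-timeline reduction: functionality of values,
Q forces all clauses witnessed, and Q is forbidden once all clauses are
witnessed by the value facts in S. -/
def consistent14 {k m : ℕ} (clauses : Fin m → Finset (Fin k × Bool))
    (S : Set (Option (Fin k × Bool))) : Prop :=
  (∀ i : Fin k, ¬ (some (i, true) ∈ S ∧ some (i, false) ∈ S)) ∧
  (none ∈ S → ∀ c : Fin m, ∃ p ∈ clauses c, some p ∈ S) ∧
  ((∀ c : Fin m, ∃ p ∈ clauses c, some p ∈ S) → none ∉ S)

/-- a satisfying valuation μ yields R = {(i, μ i)} which is a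
⊆-maximal consistent subset not containing Q. -/
theorem stmt14 {k m : ℕ} (hk : 1 ≤ k)
    (clauses : Fin m → Finset (Fin k × Bool)) (μ : Fin k → Bool)
    (hμ : ∀ c : Fin m, ∃ p ∈ clauses c, μ p.1 = p.2) :
    consistent14 clauses {o : Option (Fin k × Bool) | ∃ i : Fin k, o = some (i, μ i)} ∧
    (∀ S : Set (Option (Fin k × Bool)), consistent14 clauses S →
      {o : Option (Fin k × Bool) | ∃ i : Fin k, o = some (i, μ i)} ⊆ S →
      {o : Option (Fin k × Bool) | ∃ i : Fin k, o = some (i, μ i)} = S) ∧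
    (none ∉ {o : Option (Fin k × Bool) | ∃ i : Fin k, o = some (i, μ i)}) := by
  refine ⟨⟨?_, ?_, ?_⟩, ?_, ?_⟩
  · rintro i ⟨⟨j, hj⟩, ⟨j', hj'⟩⟩
    simp only [Option.some.injEq, Prod.mk.injEq] at hj hj'
    obtain ⟨rfl, h1⟩ := hj
    obtain ⟨rfl, h2⟩ := hj'
    rw [← h1] at h2; simp at h2
  · rintro ⟨i, hi⟩; simp at hi
  · intro _ ⟨i, hi⟩; simp at hi
  · intro S hS hsub
    apply Set.Subset.antisymm hsub
    rintro o ho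
    obtain ⟨h1, h2, h3⟩ := hS
    match o with
    | none =>
      exfalso
      apply h3 _ ho
      intro c
      obtain ⟨p, hp, hpm⟩ := hμ c
      exact ⟨p, hp, hsub ⟨p.1, by simp [hpm]⟩⟩
    | some (i, b) =>
      refine ⟨i, ?_⟩
      by_cases hb : b = μ i
      · rw [hb]
      · exfalso
        apply h1 i
        have hR : some (i, μ i) ∈ S := hsub ⟨i, rfl⟩
        cases b <;> cases hμi : μ i <;> rw [hμi] at hR hb <;> simp_all
  · rintro ⟨i, hi⟩; simp at hi
end

section
/- Let X be a finite set with level function lvl : X → ℕ, and let Incon : Set X → Prop be monotone with ¬Incon ∅. Suppose R ⊆ X satisfies ¬Incon R and R is ⊆-maximal with this property. Then R fails to be ≤_P-maximal among non-Incon sets (for the level-lexicographic order) if and only if there exist a level ℓ and an element σ ∈ X \ R with lvl σ = ℓ such that ¬Incon (R_{≤ℓ} ∪ {σ}), where R_{≤ℓ} = {x ∈ R : lvl x ≤ ℓ}. -/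
/-- a ⊆-maximal non-inconsistent set R fails ≤_P-maximality iff a
single missing element of some level ℓ can be consistently added to R's prefix
up to level ℓ. -/
theorem stmt18 {X : Type*} [Fintype X] (lvl : X → ℕ) (Incon : Set X → Prop)
    (mono : ∀ S S' : Set X, S ⊆ S' → Incon S → Incon S')
    (hEmpty : ¬ Incon (∅ : Set X)) (R : Set X) (hR : ¬ Incon R)
    (hmax : ∀ S : Set X, ¬ Incon S → ¬ R ⊂ S) :
    (¬ ∀ S : Set X, ¬ Incon S → leP lvl R S → R = S) ↔
      ∃ ℓ : ℕ, ∃ σ : X, σ ∉ R ∧ lvl σ = ℓ ∧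
        ¬ Incon ({x ∈ R | lvl x ≤ ℓ} ∪ {σ}) := by
  constructor
  · intro h
    push_neg at h
    obtain ⟨S, hS, hle, hne⟩ := h
    rcases hle with rfl | ⟨k, hbelow, hsub⟩
    · exact absurd rfl hne
    obtain ⟨σ, hσS, hσR⟩ := Set.exists_of_ssubset hsub
    obtain ⟨hσS', hσlvl⟩ := hσS
    refine ⟨k, σ, ?_, hσlvl, ?_⟩
    · intro hσR'
      exact hσR ⟨hσR', hσlvl⟩
    · intro hbad
      apply hS
      apply mono _ _ ?_ hbad
      intro x hx
      rcases hx with ⟨hxR, hxle⟩ | hx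
      · rcases lt_or_eq_of_le hxle with hlt | heq
        · have : x ∈ levelSet lvl S (lvl x) := by
            rw [← hbelow (lvl x) hlt]; exact ⟨hxR, rfl⟩
          exact this.1
        · exact (hsub.1 ⟨hxR, heq⟩).1
      · rcases hx with rfl; exact hσS'
  · rintro ⟨ℓ, σ, hσR, hlvl, hcon⟩ h
    set S : Set X := {x ∈ R | lvl x ≤ ℓ} ∪ {σ} with hSdef
    have hlep : leP lvl R S := by
      refine Or.inr ⟨ℓ, ?_, ?_, ?_⟩
      · intro m hm
        ext x
        constructor
        · rintro ⟨hxR, rfl⟩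
          exact ⟨Or.inl ⟨hxR, le_of_lt hm⟩, rfl⟩
        · rintro ⟨hxS, rfl⟩
          rcases hxS with ⟨hxR, _⟩ | hx
          · exact ⟨hxR, rfl⟩
          · rcases hx with rfl; omega
      · rintro x ⟨hxR, rfl⟩
        exact ⟨Or.inl ⟨hxR, le_of_eq rfl⟩, rfl⟩
      · intro hsub
        have : σ ∈ levelSet lvl R ℓ := hsub ⟨Or.inr rfl, hlvl⟩
        exact hσR this.1
    have := h S hcon hlep
    apply hσR
    rw [this]
    exact Or.inr rfl
end
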